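/- Let (R,Δ) be an odd form ring, n ∈ ℕ, and σ ∈ GL_{2n+1}(R), with the entries of σ⁻¹ written σ'_{ij}. Then σ ∈ U_{2n+1}(R,Δ) if and only if both of the following hold: (1) σ'_{ij} = λ^{−(ε(i)+1)/2}·\overline{σ_{−j,−i}}·λ^{(ε(j)+1)/2} for all i,j ∈ Θ_hb; μσ'_{0j} = \overline{σ_{−j,0}}·λ^{(ε(j)+1)/2} for all j ∈ Θ_hb; σ'_{i0} = λ^{−(ε(i)+1)/2}·\overline{σ_{0,−i}}·μ for all i ∈ Θ_hb; and μσ'_{00} = \overline{σ_{00}}·μ; and (2) q(σ_{*j}) ∸ (δ_{0j},0) ∈ Δ for all j ∈ Θ, where σ_{*j} denotes the j-th column of σ. -/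

import Mathlib

open scoped BigOperators

noncomputable section

/-- The index set `Θ = {-n, …, n}` for the odd-dimensional unitary group. -/
abbrev Idx (n : ℕ) : Type := {i : ℤ // i ∈ Finset.Icc (-(n : ℤ)) (n : ℤ)}

namespace Idx

/-- Negation of an index. -/
def neg {n : ℕ} (i : Idx n) : Idx n :=
  ⟨-i.1, by have h := i.2; rw [Finset.mem_Icc] at h ⊢; omega⟩

/-- The index `0`. -/
def zero (n : ℕ) : Idx n := ⟨0, by rw [Finset.mem_Icc]; omega⟩

/-- Construct an index from an integer. -/
def of (n : ℕ) (i : ℤ) (h1 : -(n : ℤ) ≤ i) (h2 : i ≤ (n : ℤ)) : Idx n :=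
  ⟨i, Finset.mem_Icc.mpr ⟨h1, h2⟩⟩

end Idx

/-- The positive indices `{1, …, n}`. -/
def posIdx (n : ℕ) : Finset (Idx n) := Finset.univ.filter (fun i => 0 < i.1)

/-- The position of an index in the ordering `1, …, n, 0, -n, …, -1`. -/
def ordIdx {n : ℕ} (i : Idx n) : ℤ :=
  if 0 < i.1 then i.1 else if i.1 = 0 then (n : ℤ) + 1 else 2 * (n : ℤ) + 2 + i.1

/-- The group `GL_{2n+1}(R)` of invertible `(2n+1) × (2n+1)` matrices. -/
abbrev GLn (R : Type*) [Ring R] (n : ℕ) : Type _ := (Matrix (Idx n) (Idx n) R)ˣ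

/-- `J(Ω) = {y | ∃ z, (y, z) ∈ Ω}`. -/
def JSet {R : Type*} (Ω : Set (R × R)) : Set R := {y | ∃ z, (y, z) ∈ Ω}

/-- `M(R, Δ) = {u | u_0 ∈ J(Δ)}`. -/
def MRD {R : Type*} (Δ : Set (R × R)) (n : ℕ) : Set (Idx n → R) :=
  {u | u (Idx.zero n) ∈ JSet Δ}

/-- `M(I, Ω) = {u | u_i ∈ I for i ∈ Θ_hb, u_0 ∈ J(Ω)}`. -/
def MIO {R : Type*} (I : Set R) (Ω : Set (R × R)) (n : ℕ) : Set (Idx n → R) :=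
  {u | (∀ i : Idx n, i.1 ≠ 0 → u i ∈ I) ∧ u (Idx.zero n) ∈ JSet Ω}

/-- The data of an odd quadruple `(R, ⁻, λ, μ)`: a ring with an anti-isomorphism `bar`,
a symmetry `lam` and an element `mu` with `mu = bar mu * lam`. -/
structure OddFormRingData (R : Type*) [Ring R] where
  bar : R → R
  lam : R
  mu : R
  bar_bijective : Function.Bijective bar
  bar_add : ∀ x y : R, bar (x + y) = bar x + bar y
  bar_mul : ∀ x y : R, bar (x * y) = bar y * bar x
  bar_one : bar 1 = 1
  bar_bar : ∀ x : R, bar (bar x) = lam * x * bar lam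
  mu_symm : mu = bar mu * lam

namespace OddFormRingData

variable {R : Type*} [Ring R] (D : OddFormRingData R)

/-- Heisenberg addition `∔` on `R × R`. -/
def hAdd (a b : R × R) : R × R := (a.1 + b.1, a.2 + b.2 - D.bar a.1 * D.mu * b.1)

/-- Heisenberg negation. -/
def hNeg (a : R × R) : R × R := (-a.1, -a.2 - D.bar a.1 * D.mu * a.1)

/-- Heisenberg subtraction `∸`. -/
def hSub (a b : R × R) : R × R := D.hAdd a (D.hNeg b)

/-- The scalar operation `(x, y) • a = (x a, ā y a)`. -/
def hSMul (a : R × R) (r : R) : R × R := (a.1 * r, D.bar r * a.2 * r)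

/-- `Δ_min = {(0, x - x̄ λ) | x ∈ R}`. -/
def DeltaMin : Set (R × R) := {p | ∃ x : R, p = (0, x - D.bar x * D.lam)}

/-- `Δ_max = {(x, y) | x̄ μ x + y + ȳ λ = 0}`. -/
def DeltaMax : Set (R × R) := {p | D.bar p.1 * D.mu * p.1 + p.2 + D.bar p.2 * D.lam = 0}

/-- `Δ` is an odd form parameter. -/
structure IsFormParam (Δ : Set (R × R)) : Prop where
  add_mem : ∀ a ∈ Δ, ∀ b ∈ Δ, D.hAdd a b ∈ Δ
  neg_mem : ∀ a ∈ Δ, D.hNeg a ∈ Δ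
  smul_mem : ∀ a ∈ Δ, ∀ r : R, D.hSMul a r ∈ Δ
  min_le : D.DeltaMin ⊆ Δ
  le_max : Δ ⊆ D.DeltaMax

/-- `I` is an involution invariant (two-sided) ideal of `R`. -/
structure IsInvIdeal (I : Set R) : Prop where
  zero_mem : (0 : R) ∈ I
  add_mem : ∀ x ∈ I, ∀ y ∈ I, x + y ∈ I
  neg_mem : ∀ x ∈ I, -x ∈ I
  mul_left : ∀ r : R, ∀ x ∈ I, r * x ∈ I
  mul_right : ∀ r : R, ∀ x ∈ I, x * r ∈ I
  bar_mem : ∀ x ∈ I, D.bar x ∈ I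

/-- `Ĩ = {x | ȳ μ x ∈ I for all y ∈ J(Δ)}`. -/
def tildeI (Δ : Set (R × R)) (I : Set R) : Set R :=
  {x | ∀ y ∈ JSet Δ, D.bar y * D.mu * x ∈ I}

/-- `Ω^I_min`, the `∔`-subgroup of `R × R` generated by `{(0, x - x̄λ) | x ∈ I}` and
`{a • c | a ∈ Δ, c ∈ I}`. -/
inductive OmegaMin (Δ : Set (R × R)) (I : Set R) : R × R → Prop
  | base (x : R) (hx : x ∈ I) : OmegaMin Δ I (0, x - D.bar x * D.lam)
  | smul (a : R × R) (ha : a ∈ Δ) (c : R) (hc : c ∈ I) : OmegaMin Δ I (D.hSMul a c)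
  | add (a b : R × R) : OmegaMin Δ I a → OmegaMin Δ I b → OmegaMin Δ I (D.hAdd a b)
  | neg (a : R × R) : OmegaMin Δ I a → OmegaMin Δ I (D.hNeg a)

/-- `Ω^I_min` as a set. -/
def OmegaMinSet (Δ : Set (R × R)) (I : Set R) : Set (R × R) := {p | D.OmegaMin Δ I p}

/-- `Ω^I_max = Δ ∩ (Ĩ × I)`. -/
def OmegaMaxSet (Δ : Set (R × R)) (I : Set R) : Set (R × R) :=
  {p | p ∈ Δ ∧ p.1 ∈ D.tildeI Δ I ∧ p.2 ∈ I}

/-- `Ω` is a relative odd form parameter for `I`. -/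
structure IsRelFormParam (Δ : Set (R × R)) (I : Set R) (Ω : Set (R × R)) : Prop where
  add_mem : ∀ a ∈ Ω, ∀ b ∈ Ω, D.hAdd a b ∈ Ω
  neg_mem : ∀ a ∈ Ω, D.hNeg a ∈ Ω
  smul_mem : ∀ a ∈ Ω, ∀ r : R, D.hSMul a r ∈ Ω
  min_le : D.OmegaMinSet Δ I ⊆ Ω
  le_max : Ω ⊆ D.OmegaMaxSet Δ I

/-- `(I, Ω)` is an odd form ideal of `(R, Δ)`. -/
def IsFormIdeal (Δ : Set (R × R)) (I : Set R) (Ω : Set (R × R)) : Prop :=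
  D.IsInvIdeal I ∧ D.IsRelFormParam Δ I Ω

/-- `Ω^{-1} = {(x, y) | (x, ȳ) ∈ Ω}`. -/
def paramInv (Ω : Set (R × R)) : Set (R × R) := {p | (p.1, D.bar p.2) ∈ Ω}

/-- `Ω^{-ε(i)}`. -/
def paramPow {n : ℕ} (Ω : Set (R × R)) (i : Idx n) : Set (R × R) :=
  if 0 < i.1 then D.paramInv Ω else Ω

/-- The λ-Hermitian form `b`. -/
def bform {n : ℕ} (u v : Idx n → R) : R :=
  (∑ i ∈ posIdx n, D.bar (u i) * v i.neg) + D.bar (u (Idx.zero n)) * D.mu * v (Idx.zero n)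
    + ∑ i ∈ posIdx n, D.bar (u i.neg) * D.lam * v i

/-- The quadratic map `q`. -/
def qform {n : ℕ} (u : Idx n → R) : R × R :=
  (u (Idx.zero n), ∑ i ∈ posIdx n, D.bar (u i) * u i.neg)

/-- The odd-dimensional unitary group `U_{2n+1}(R, Δ)`, as a subset of `GL_{2n+1}(R)`. -/
def unitary (Δ : Set (R × R)) (n : ℕ) : Set (GLn R n) :=
  {σ | (∀ u v : Idx n → R,
          D.bform (Matrix.mulVec σ.val u)
            (Matrix.mulVec σ.val v) = D.bform u v)
      ∧ ∀ u : Idx n → R,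
          D.hSub (D.qform (Matrix.mulVec σ.val u)) (D.qform u) ∈ Δ}

/-- The short root matrix `T_{ij}(x)`. -/
def shortRootMat {n : ℕ} (i j : Idx n) (x : R) : Matrix (Idx n) (Idx n) R :=
  1 + Matrix.single i j x
    - Matrix.single j.neg i.neg
        ((if 0 < j.1 then (1 : R) else D.bar D.lam) * D.bar x *
          (if 0 < i.1 then (1 : R) else D.lam))

/-- The extra short root matrix `T_i(x, y)`. -/
def extraShortRootMat {n : ℕ} (i : Idx n) (x y : R) : Matrix (Idx n) (Idx n) R :=
  1 + Matrix.single (Idx.zero n) i.neg x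
    - Matrix.single i (Idx.zero n)
        ((if 0 < i.1 then D.bar D.lam else (1 : R)) * D.bar x * D.mu)
    + Matrix.single i i.neg y

/-- `g` is a short root matrix `T_{ij}(x)`. -/
def IsShortRootElem {n : ℕ} (g : GLn R n) : Prop :=
  ∃ (i j : Idx n) (x : R), i.1 ≠ 0 ∧ j.1 ≠ 0 ∧ i.1 ≠ j.1 ∧ i.1 ≠ -j.1 ∧
    g.val = D.shortRootMat i j x

/-- `g` is an extra short root matrix `T_i(x, y)` with `(x, y) ∈ Δ^{-ε(i)}`. -/
def IsExtraShortRootElem {n : ℕ} (Δ : Set (R × R)) (g : GLn R n) : Prop :=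
  ∃ (i : Idx n) (x y : R), i.1 ≠ 0 ∧ (x, y) ∈ D.paramPow Δ i ∧
    g.val = D.extraShortRootMat i x y

/-- The elementary subgroup `EU_{2n+1}(R, Δ)`. -/
def elemGroup (Δ : Set (R × R)) (n : ℕ) : Subgroup (GLn R n) :=
  Subgroup.closure {g | D.IsShortRootElem g ∨ D.IsExtraShortRootElem Δ g}

/-- `g` is an `(I, Ω)`-elementary short root matrix. -/
def IsRelShortRootElem {n : ℕ} (I : Set R) (g : GLn R n) : Prop :=
  ∃ (i j : Idx n) (x : R), i.1 ≠ 0 ∧ j.1 ≠ 0 ∧ i.1 ≠ j.1 ∧ i.1 ≠ -j.1 ∧ x ∈ I ∧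
    g.val = D.shortRootMat i j x

/-- `g` is an `(I, Ω)`-elementary extra short root matrix. -/
def IsRelExtraShortRootElem {n : ℕ} (Ω : Set (R × R)) (g : GLn R n) : Prop :=
  ∃ (i : Idx n) (x y : R), i.1 ≠ 0 ∧ (x, y) ∈ D.paramPow Ω i ∧
    g.val = D.extraShortRootMat i x y

/-- The preelementary subgroup `EU_{2n+1}(I, Ω)`. -/
def preElemGroup (I : Set R) (Ω : Set (R × R)) (n : ℕ) : Subgroup (GLn R n) :=
  Subgroup.closure {g | D.IsRelShortRootElem I g ∨ D.IsRelExtraShortRootElem Ω g}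

/-- The relative elementary subgroup `EU_{2n+1}((R, Δ), (I, Ω))`,
the normal closure of `EU_{2n+1}(I, Ω)` in `EU_{2n+1}(R, Δ)`. -/
def elemRelGroup (Δ : Set (R × R)) (I : Set R) (Ω : Set (R × R)) (n : ℕ) : Subgroup (GLn R n) :=
  Subgroup.closure {x | ∃ e ∈ D.elemGroup Δ n, ∃ g ∈ D.preElemGroup I Ω n, x = e * g * e⁻¹}

/-- The principal congruence subgroup `U_{2n+1}((R, Δ), (I, Ω))`. -/
def principalCongruence (Δ : Set (R × R)) (I : Set R) (Ω : Set (R × R)) (n : ℕ) :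
    Set (GLn R n) :=
  {σ | σ ∈ D.unitary Δ n
      ∧ (∀ i j : Idx n, i.1 ≠ 0 → j.1 ≠ 0 →
          σ.val i j - (if i = j then (1 : R) else 0) ∈ I)
      ∧ ∀ u ∈ MRD Δ n,
          D.hSub (D.qform (Matrix.mulVec σ.val u)) (D.qform u) ∈ Ω}

/-- The group `Ũ_{2n+1}((R, Δ), (I, Ω))`. -/
def tildeU (Δ : Set (R × R)) (I : Set R) (Ω : Set (R × R)) (n : ℕ) : Set (GLn R n) :=
  {σ | σ ∈ D.unitary Δ n ∧ ∀ u ∈ MIO I Ω n,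
      D.hSub (D.qform (Matrix.mulVec σ.val u)) (D.qform u) ∈ Ω
      ∧ D.hSub (D.qform (Matrix.mulVec ((σ⁻¹).val) u)) (D.qform u) ∈ Ω}

/-- The full congruence subgroup `CU_{2n+1}((R, Δ), (I, Ω))`. -/
def fullCongruence (Δ : Set (R × R)) (I : Set R) (Ω : Set (R × R)) (n : ℕ) : Set (GLn R n) :=
  {σ | σ ∈ D.tildeU Δ I Ω n ∧ ∀ τ ∈ D.elemGroup Δ n,
      σ * τ * σ⁻¹ * τ⁻¹ ∈ D.principalCongruence Δ I Ω n}

/-- `H` is a subgroup of `U_{2n+1}(R, Δ)`. -/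
structure IsSubgroupOfUnitary (Δ : Set (R × R)) (n : ℕ) (H : Set (GLn R n)) : Prop where
  subset : H ⊆ D.unitary Δ n
  one_mem : (1 : GLn R n) ∈ H
  mul_mem : ∀ a ∈ H, ∀ b ∈ H, a * b ∈ H
  inv_mem : ∀ a ∈ H, a⁻¹ ∈ H

/-- `H` is normalized by the elementary subgroup `EU_{2n+1}(R, Δ)`. -/
def IsENormal (Δ : Set (R × R)) (n : ℕ) (H : Set (GLn R n)) : Prop :=
  ∀ e ∈ D.elemGroup Δ n, ∀ h ∈ H, e * h * e⁻¹ ∈ H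

/-- The ideal part of the level of `H`. -/
def levelI {n : ℕ} (H : Set (GLn R n)) : Set R :=
  {x | ∃ i j : Idx n, i.1 ≠ 0 ∧ j.1 ≠ 0 ∧ i.1 ≠ j.1 ∧ i.1 ≠ -j.1 ∧
      ∃ g ∈ H, g.val = D.shortRootMat i j x}

/-- The form parameter part of the level of `H`. -/
def levelOmega {n : ℕ} (Δ : Set (R × R)) (H : Set (GLn R n)) : Set (R × R) :=
  {p | p ∈ Δ ∧ ∃ i : Idx n, i.1 < 0 ∧
      ∃ g ∈ H, g.val = D.extraShortRootMat i p.1 p.2}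

/-- The relative odd form parameter `^σΩ` for `I` defined by `Ω` and `σ`. -/
def transportedParam (Δ : Set (R × R)) (I : Set R) (Ω : Set (R × R)) (n : ℕ) (σ : GLn R n) :
    Set (R × R) :=
  {p | ∃ x y : R, (x, y) ∈ Ω ∧ ∃ m ∈ D.OmegaMinSet Δ I,
      p = D.hAdd (D.hAdd
            (D.hSMul
              (D.hSub (D.qform (fun i => σ.val i (Idx.zero n)))
                ((1 : R), (0 : R))) x)
            (x, y)) m}

/-- `TEU_{2n+1}(R, Δ)`: upper triangular elementary matrices with ones on the diagonal,
with respect to the index ordering `1, …, n, 0, -n, …, -1`. -/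
def upperTriangularElem (Δ : Set (R × R)) (n : ℕ) : Set (GLn R n) :=
  {f | f ∈ D.elemGroup Δ n
      ∧ (∀ i j : Idx n, ordIdx j < ordIdx i → f.val i j = 0)
      ∧ ∀ i : Idx n, f.val i i = 1}

/-- `UEU_{2n+1}(R, Δ)`: elementary matrices of block form `(A B C; 0 1 D; 0 0 E)`
with respect to the decomposition `Θ₊, {0}, Θ₋`. -/
def blockUpperElem (Δ : Set (R × R)) (n : ℕ) : Set (GLn R n) :=
  {f | f ∈ D.elemGroup Δ n
      ∧ (∀ i j : Idx n, i.1 ≤ 0 → 0 < j.1 → f.val i j = 0)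
      ∧ f.val (Idx.zero n) (Idx.zero n) = 1
      ∧ ∀ i : Idx n, i.1 < 0 → f.val i (Idx.zero n) = 0}

/-- `R` is quasifinite: it is the union of a directed family of subrings, each closed
under the involution, containing `λ` and `μ`, and finitely generated as a module over its
center. -/
def IsQuasifinite : Prop :=
  ∃ S : Set (Subring R), S.Nonempty ∧ DirectedOn (· ≤ ·) S ∧
    (∀ A ∈ S, (∀ x ∈ A, D.bar x ∈ A) ∧ D.lam ∈ A ∧ D.mu ∈ A ∧
      ∃ (m : ℕ) (v : Fin m → R), (∀ k, v k ∈ A) ∧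
        ∀ x ∈ A, ∃ c : Fin m → R,
          (∀ k, c k ∈ A ∧ ∀ y ∈ A, c k * y = y * c k) ∧ x = ∑ k, c k * v k) ∧
    ∀ x : R, ∃ A ∈ S, x ∈ A

end OddFormRingData

/-- The Jacobson radical of a (possibly noncommutative) ring. -/
def jacobsonRadical (R : Type*) [Ring R] : Ideal R := sInf {J : Ideal R | J.IsMaximal}

/-- `R` is semilocal: `R / rad R` is semisimple (hence semisimple Artinian). -/
def IsSemilocalRing (R : Type*) [Ring R] : Prop :=
  IsSemisimpleModule R (R ⧸ jacobsonRadical R)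

/-- A bundled (possibly noncommutative) ring. -/
structure BundledRing : Type (u + 1) where
  carrier : Type u
  [str : Ring carrier]

attribute [instance] BundledRing.str

instance : CoeSort BundledRing (Type u) := ⟨BundledRing.carrier⟩

universe u
/-!
The form `b` is `b(u, v) = ∑ ū₋ᵢ cᵢ vᵢ` with `cᵢ = λ, μ, 1` for `i > 0`, `i = 0`, `i < 0`, i.e. the
sesquilinear form of the Gram matrix `G` with `G₋ₖₖ = cₖ`. Hence `σ` preserves `b` iff
`σ̄ᵀ G σ = G`, i.e. `σ̄ᵀ G = G σ⁻¹`, and this matrix identity read entrywise is condition (1).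
Given that, `φ(u) = q(σu) ∸ q(u)` satisfies `φ(u + v) = φ(v) ∔ φ(u) ∔ (0, x - x̄λ)` for some `x`
(the failure of `q` to be additive is governed by `b`, which `σ` preserves) and
`φ(ua) = φ(u) • a`. Since `Δ ⊇ Δ_min` is closed under `∔` and `•`, `φ` takes values in `Δ`
as soon as it does on the standard basis, which is condition (2).
-/

open scoped Matrix

namespace Idx

variable {n : ℕ}

@[simp] lemma neg_neg (i : Idx n) : i.neg.neg = i :=
  Subtype.ext (by simp [Idx.neg])

@[simp] lemma neg_zero : (Idx.zero n).neg = Idx.zero n :=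
  Subtype.ext (by simp [Idx.neg, Idx.zero])

lemma neg_eq_iff {i j : Idx n} : i.neg = j ↔ i = j.neg := by
  constructor <;> rintro rfl <;> simp

@[simp] lemma neg_val (i : Idx n) : i.neg.1 = -i.1 := rfl

lemma eq_zero_iff {i : Idx n} : i = Idx.zero n ↔ i.1 = 0 :=
  Subtype.ext_iff

lemma sum_univ_eq_sum_posIdx {M : Type*} [AddCommMonoid M] (g : Idx n → M) :
    ∑ i, g i = ∑ i ∈ posIdx n, g i + g (Idx.zero n) + ∑ i ∈ posIdx n, g i.neg := by
  have hneg :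
      ∑ i ∈ posIdx n, g i.neg = ∑ i ∈ Finset.univ.filter (fun i : Idx n => i.1 < 0), g i :=
    Finset.sum_nbij' Idx.neg Idx.neg (by simp [posIdx, Idx.neg]) (by simp [posIdx, Idx.neg])
      (by simp) (by simp) (by simp)
  have hnonpos : Finset.univ.filter (fun i : Idx n => ¬ 0 < i.1)
      = insert (Idx.zero n) (Finset.univ.filter (fun i : Idx n => i.1 < 0)) := by
    ext i
    simp only [Finset.mem_filter, Finset.mem_univ, true_and, Finset.mem_insert, eq_zero_iff]
    omega
  rw [hneg, ← Finset.sum_filter_add_sum_filter_not Finset.univ (fun i : Idx n => 0 < i.1),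
    hnonpos, Finset.sum_insert (by simp [Idx.zero]), add_assoc]
  rfl

end Idx

@[simp] lemma mem_posIdx {n : ℕ} {i : Idx n} : i ∈ posIdx n ↔ 0 < i.1 := by
  simp [posIdx]

namespace OddFormRingData

variable {R : Type*} [Ring R] (D : OddFormRingData R)

def barAddHom : R →+ R := AddMonoidHom.mk' D.bar D.bar_add

lemma bar_zero : D.bar 0 = 0 := D.barAddHom.map_zero

lemma bar_neg (x : R) : D.bar (-x) = -D.bar x := D.barAddHom.map_neg x

lemma bar_sub (x y : R) : D.bar (x - y) = D.bar x - D.bar y := D.barAddHom.map_sub x y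

lemma bar_sum {ι : Type*} (s : Finset ι) (f : ι → R) :
    D.bar (∑ i ∈ s, f i) = ∑ i ∈ s, D.bar (f i) :=
  map_sum D.barAddHom f s

lemma lam_mul_bar_lam : D.lam * D.bar D.lam = 1 := by
  simpa [D.bar_one] using (D.bar_bar 1).symm

lemma bar_lam_mul_lam : D.bar D.lam * D.lam = 1 := by
  apply (D.bar_bijective.injective.comp D.bar_bijective.injective)
  simp only [Function.comp_apply, D.bar_bar, mul_one, ← mul_assoc, D.lam_mul_bar_lam, one_mul]

def lamUnit : Rˣ := ⟨D.lam, D.bar D.lam, D.lam_mul_bar_lam, D.bar_lam_mul_lam⟩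

lemma bar_mu : D.bar D.mu = D.mu * D.bar D.lam := by
  conv_lhs => rw [D.mu_symm]
  rw [D.bar_mul, D.bar_bar, ← mul_assoc, ← mul_assoc, D.bar_lam_mul_lam, one_mul]

lemma bar_bar_mul_mu_mul (a b : R) : D.bar (D.bar a * D.mu * b) * D.lam = D.bar b * D.mu * a := by
  rw [D.bar_mul, D.bar_mul, D.bar_bar, D.bar_mu]
  simp only [mul_assoc, D.bar_lam_mul_lam, mul_one]
  rw [← mul_assoc (D.bar D.lam), D.bar_lam_mul_lam, one_mul]

lemma bar_bar_mul_lam_mul (a b : R) : D.bar (D.bar a * D.lam * b) * D.lam = D.bar b * a := by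
  rw [D.bar_mul, D.bar_mul, D.bar_bar]
  simp only [mul_assoc, D.bar_lam_mul_lam, mul_one]
  rw [← mul_assoc (D.bar D.lam), D.bar_lam_mul_lam, one_mul]

section Sesquilinear

variable {ι : Type*} [Fintype ι]

def barTranspose (A : Matrix ι ι R) : Matrix ι ι R := Matrix.of fun i j => D.bar (A j i)

def sesq (M : Matrix ι ι R) (u v : ι → R) : R := (D.bar ∘ u) ᵥ* M ⬝ᵥ v

lemma bar_comp_mulVec (A : Matrix ι ι R) (u : ι → R) :
    D.bar ∘ (A *ᵥ u) = (D.bar ∘ u) ᵥ* D.barTranspose A := by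
  funext i
  simp [Matrix.mulVec, Matrix.vecMul, dotProduct, bar_sum, D.bar_mul, barTranspose]

lemma sesq_mulVec (M A : Matrix ι ι R) (u v : ι → R) :
    D.sesq M (A *ᵥ u) (A *ᵥ v) = D.sesq (D.barTranspose A * M * A) u v := by
  simp only [sesq, bar_comp_mulVec, Matrix.dotProduct_mulVec, Matrix.vecMul_vecMul]

lemma sesq_single_one [DecidableEq ι] (M : Matrix ι ι R) (j k : ι) :
    D.sesq M (Pi.single j 1) (Pi.single k 1) = M j k := by
  have hbar : D.bar ∘ Pi.single j (1 : R) = Pi.single j 1 := by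
    funext i; by_cases h : i = j <;> simp [h, D.bar_one, D.bar_zero]
  simp [sesq, hbar]

lemma sesq_mulVec_eq_iff (M A : Matrix ι ι R) :
    (∀ u v, D.sesq M (A *ᵥ u) (A *ᵥ v) = D.sesq M u v) ↔ D.barTranspose A * M * A = M := by
  classical
  simp only [sesq_mulVec]
  refine ⟨fun h => ?_, fun h => by simp [h]⟩
  ext j k
  simpa only [sesq_single_one] using h (Pi.single j 1) (Pi.single k 1)

end Sesquilinear

variable {n : ℕ}

def formCoeff (i : Idx n) : R := if 0 < i.1 then D.lam else if i.1 = 0 then D.mu else 1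

lemma formCoeff_of_pos {i : Idx n} (h : 0 < i.1) : D.formCoeff i = D.lam := if_pos h

lemma formCoeff_zero : D.formCoeff (Idx.zero n) = D.mu := rfl

lemma formCoeff_of_neg {i : Idx n} (h : i.1 < 0) : D.formCoeff i = 1 := by
  rw [formCoeff, if_neg (by omega), if_neg (by omega)]

lemma formCoeff_of_ne_zero {i : Idx n} (h : i.1 ≠ 0) :
    D.formCoeff i = if 0 < i.1 then D.lam else 1 := by
  rw [formCoeff, if_neg h]

lemma formCoeff_mul_eq_iff {i : Idx n} (h : i.1 ≠ 0) (x y : R) :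
    D.formCoeff i * x = y ↔ x = (if 0 < i.1 then D.bar D.lam else 1) * y := by
  rw [D.formCoeff_of_ne_zero h]
  split_ifs
  · exact (Units.eq_inv_mul_iff_mul_eq (b := D.lamUnit)).symm
  · simp

def gram (n : ℕ) : Matrix (Idx n) (Idx n) R :=
  Matrix.of fun j k => if j = k.neg then D.formCoeff k else 0

lemma bform_eq_sesq (u v : Idx n → R) : D.bform u v = D.sesq (D.gram n) u v := by
  have hsum : D.sesq (D.gram n) u v = ∑ k, D.bar (u k.neg) * D.formCoeff k * v k := by
    simp [sesq, gram, Matrix.vecMul, dotProduct]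
  have hpos : ∑ i ∈ posIdx n, D.bar (u i.neg) * D.formCoeff i * v i
      = ∑ i ∈ posIdx n, D.bar (u i.neg) * D.lam * v i :=
    Finset.sum_congr rfl fun i hi => by rw [D.formCoeff_of_pos (mem_posIdx.1 hi)]
  have hneg : ∑ i ∈ posIdx n, D.bar (u i.neg.neg) * D.formCoeff i.neg * v i.neg
      = ∑ i ∈ posIdx n, D.bar (u i) * v i.neg :=
    Finset.sum_congr rfl fun i hi => by
      rw [Idx.neg_neg, D.formCoeff_of_neg (by simpa using mem_posIdx.1 hi), mul_one]
  rw [hsum, Idx.sum_univ_eq_sum_posIdx, hpos, hneg, Idx.neg_zero, formCoeff_zero, bform]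
  abel

lemma mul_gram_apply (X : Matrix (Idx n) (Idx n) R) (i j : Idx n) :
    (X * D.gram n) i j = X i j.neg * D.formCoeff j := by
  simp [Matrix.mul_apply, gram]

lemma gram_mul_apply (Y : Matrix (Idx n) (Idx n) R) (i j : Idx n) :
    (D.gram n * Y) i j = D.formCoeff i.neg * Y i.neg j := by
  simp [Matrix.mul_apply, gram, ← Idx.neg_eq_iff]

lemma bform_mulVec_eq_iff (σ : GLn R n) :
    (∀ u v, D.bform (σ.val *ᵥ u) (σ.val *ᵥ v) = D.bform u v) ↔
      ∀ i j : Idx n, D.formCoeff i * (σ⁻¹).val i j = D.bar (σ.val j.neg i.neg) * D.formCoeff j := by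
  simp only [bform_eq_sesq, sesq_mulVec_eq_iff, ← Units.eq_mul_inv_iff_mul_eq, ← Matrix.ext_iff,
    mul_gram_apply, gram_mul_apply, barTranspose, Matrix.of_apply]
  exact ⟨fun h i j => by simpa using (h i.neg j).symm, fun h i j => by simpa using (h i.neg j).symm⟩

lemma forall_formCoeff_mul_inv_apply_iff (σ : GLn R n) :
    (∀ i j : Idx n, D.formCoeff i * (σ⁻¹).val i j = D.bar (σ.val j.neg i.neg) * D.formCoeff j) ↔
      ((∀ i j : Idx n, i.1 ≠ 0 → j.1 ≠ 0 →
          (σ⁻¹).val i j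
            = (if 0 < i.1 then D.bar D.lam else 1) * D.bar (σ.val j.neg i.neg) *
                (if 0 < j.1 then D.lam else 1)) ∧
        (∀ j : Idx n, j.1 ≠ 0 →
          D.mu * (σ⁻¹).val (Idx.zero n) j
            = D.bar (σ.val j.neg (Idx.zero n)) * (if 0 < j.1 then D.lam else 1)) ∧
        (∀ i : Idx n, i.1 ≠ 0 →
          (σ⁻¹).val i (Idx.zero n)
            = (if 0 < i.1 then D.bar D.lam else 1) * D.bar (σ.val (Idx.zero n) i.neg) * D.mu) ∧
        D.mu * (σ⁻¹).val (Idx.zero n) (Idx.zero n)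
          = D.bar (σ.val (Idx.zero n) (Idx.zero n)) * D.mu) := by
  constructor
  · intro h
    refine ⟨fun i j hi hj => ?_, fun j hj => ?_, fun i hi => ?_, ?_⟩
    · rw [mul_assoc, ← D.formCoeff_of_ne_zero hj, ← D.formCoeff_mul_eq_iff hi]
      exact h i j
    · simpa [formCoeff_zero, D.formCoeff_of_ne_zero hj] using h (Idx.zero n) j
    · rw [mul_assoc, ← D.formCoeff_mul_eq_iff hi]
      simpa [formCoeff_zero] using h i (Idx.zero n)
    · simpa [formCoeff_zero] using h (Idx.zero n) (Idx.zero n)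
  · rintro ⟨hij, h0j, hi0, h00⟩ i j
    rcases eq_or_ne i.1 0 with hi | hi <;> rcases eq_or_ne j.1 0 with hj | hj
    · obtain rfl := Idx.eq_zero_iff.2 hi
      obtain rfl := Idx.eq_zero_iff.2 hj
      simpa [formCoeff_zero] using h00
    · obtain rfl := Idx.eq_zero_iff.2 hi
      simpa [formCoeff_zero, D.formCoeff_of_ne_zero hj] using h0j j hj
    · obtain rfl := Idx.eq_zero_iff.2 hj
      rw [D.formCoeff_mul_eq_iff hi, formCoeff_zero, Idx.neg_zero, ← mul_assoc]
      exact hi0 i hi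
    · rw [D.formCoeff_mul_eq_iff hi, D.formCoeff_of_ne_zero hj, ← mul_assoc]
      exact hij i j hi hj

lemma hSub_hSMul (p r : R × R) (a : R) :
    D.hSub (D.hSMul p a) (D.hSMul r a) = D.hSMul (D.hSub p r) a := by
  simp only [hSub, hAdd, hNeg, hSMul, D.bar_mul, Prod.mk.injEq]
  constructor <;> noncomm_ring

/-- In `(R × R, ∔)` the elements `(0, t)` are central and the commutator of `a` and `b` is
`(0, b̄₁ μ a₁ - ā₁ μ b₁)`. -/
lemma hSub_hAdd_hAdd (p P r s : R × R) (t₁ t₂ : R) :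
    D.hSub (D.hAdd (D.hAdd p P) (0, t₁)) (D.hAdd (D.hAdd r s) (0, t₂))
      = D.hAdd (D.hAdd (D.hSub P s) (D.hSub p r))
          (0, t₁ - t₂ + D.bar (P.1 - s.1) * D.mu * p.1 - D.bar p.1 * D.mu * (P.1 - s.1)) := by
  simp only [hSub, hAdd, hNeg, D.bar_add, D.bar_neg, D.bar_sub, Prod.mk.injEq]
  constructor
  · abel
  · noncomm_ring

lemma qform_zero : D.qform (0 : Idx n → R) = (0, 0) := by
  simp [qform, D.bar_zero]

lemma qform_single_one (j : Idx n) :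
    D.qform (Pi.single j 1) = (if j = Idx.zero n then (1 : R) else 0, 0) := by
  ext
  · simp [qform, Pi.single_apply, eq_comm]
  dsimp only [qform]
  refine Finset.sum_eq_zero fun i hi => ?_
  by_cases h : i = j
  · have hneg : i.neg ≠ j := fun h' => by
      have := congrArg Subtype.val (h'.trans h.symm)
      simp only [Idx.neg_val] at this
      linarith [mem_posIdx.1 hi]
    simp [hneg]
  · simp [h, D.bar_zero]

lemma qform_mul_right (u : Idx n → R) (a : R) :
    D.qform (fun i => u i * a) = D.hSMul (D.qform u) a := by
  simp only [qform, hSMul, D.bar_mul, Finset.mul_sum, Finset.sum_mul, mul_assoc]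

def halfBform (u v : Idx n → R) : R :=
  ∑ i ∈ posIdx n, D.bar (u i) * v i.neg + D.bar (u (Idx.zero n)) * D.mu * v (Idx.zero n)

lemma qform_add (u v : Idx n → R) :
    D.qform (u + v) = D.hAdd (D.hAdd (D.qform u) (D.qform v))
      (0, D.halfBform u v - D.bar (D.halfBform u v) * D.lam + D.bar (D.bform u v) * D.lam) := by
  have hb : D.bar (D.bform u v) * D.lam
      = D.bar (D.halfBform u v) * D.lam + ∑ i ∈ posIdx n, D.bar (v i) * u i.neg := by
    simp only [bform, halfBform, D.bar_add, add_mul, D.bar_sum, Finset.sum_mul,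
      D.bar_bar_mul_lam_mul]
  refine Prod.ext (add_zero _).symm ?_
  simp only [qform, hAdd, hb, halfBform, Pi.add_apply, D.bar_add, add_mul, mul_add,
    Finset.sum_add_distrib, mul_zero, sub_zero]
  abel

lemma hSub_qform_add {u v u' v' : Idx n → R} (hb : D.bform u' v' = D.bform u v) :
    ∃ x : R, D.hSub (D.qform (u' + v')) (D.qform (u + v))
      = D.hAdd (D.hAdd (D.hSub (D.qform v') (D.qform v)) (D.hSub (D.qform u') (D.qform u)))
          (0, x - D.bar x * D.lam) := by
  refine ⟨D.halfBform u' v' - D.halfBform u v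
    - D.bar (u' (Idx.zero n)) * D.mu * (v' (Idx.zero n) - v (Idx.zero n)), ?_⟩
  rw [qform_add, qform_add, hSub_hAdd_hAdd, hb]
  congr 2
  simp only [qform, D.bar_sub, sub_mul, D.bar_bar_mul_mu_mul]
  abel

variable {Δ : Set (R × R)}

lemma hSub_qform_add_mem (hΔ : D.IsFormParam Δ) {u v u' v' : Idx n → R}
    (hb : D.bform u' v' = D.bform u v) (hu : D.hSub (D.qform u') (D.qform u) ∈ Δ)
    (hv : D.hSub (D.qform v') (D.qform v) ∈ Δ) :
    D.hSub (D.qform (u' + v')) (D.qform (u + v)) ∈ Δ := by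
  obtain ⟨x, hx⟩ := D.hSub_qform_add hb
  rw [hx]
  exact hΔ.add_mem _ (hΔ.add_mem _ hv _ hu) _ (hΔ.min_le ⟨x, rfl⟩)

lemma hSub_qform_mulVec_mem (hΔ : D.IsFormParam Δ) (A : Matrix (Idx n) (Idx n) R)
    (hb : ∀ u v, D.bform (A *ᵥ u) (A *ᵥ v) = D.bform u v)
    (hcol : ∀ j, D.hSub (D.qform (fun i => A i j)) (D.qform (Pi.single j 1)) ∈ Δ)
    (u : Idx n → R) : D.hSub (D.qform (A *ᵥ u)) (D.qform u) ∈ Δ := by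
  induction u using Pi.single_induction with
  | zero =>
    rw [Matrix.mulVec_zero, qform_zero]
    exact hΔ.min_le ⟨0, by simp [hSub, hAdd, hNeg, D.bar_zero]⟩
  | add u v hu hv =>
    rw [Matrix.mulVec_add]
    exact D.hSub_qform_add_mem hΔ (hb u v) hu hv
  | single j a =>
    have hsingle : Pi.single j a = fun i => (Pi.single j 1 : Idx n → R) i * a := by
      funext i; by_cases h : i = j <;> simp [h]
    have hcol_mul : A *ᵥ Pi.single j a = fun i => A i j * a := by
      funext i; simp [Matrix.mulVec, dotProduct_single]
    rw [hcol_mul, hsingle, qform_mul_right, qform_mul_right, hSub_hSMul]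
    exact hΔ.smul_mem _ (hcol j) a

end OddFormRingData

theorem statement12_general {R : Type*} [Ring R] (D : OddFormRingData R)
    (Δ : Set (R × R)) (hΔ : D.IsFormParam Δ) (n : ℕ) (σ : GLn R n) :
    σ ∈ D.unitary Δ n ↔
      ((∀ i j : Idx n, i.1 ≠ 0 → j.1 ≠ 0 →
          (σ⁻¹).val i j
            = (if 0 < i.1 then D.bar D.lam else 1) * D.bar (σ.val j.neg i.neg) *
                (if 0 < j.1 then D.lam else 1)) ∧
        (∀ j : Idx n, j.1 ≠ 0 →
          D.mu * (σ⁻¹).val (Idx.zero n) j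
            = D.bar (σ.val j.neg (Idx.zero n)) * (if 0 < j.1 then D.lam else 1)) ∧
        (∀ i : Idx n, i.1 ≠ 0 →
          (σ⁻¹).val i (Idx.zero n)
            = (if 0 < i.1 then D.bar D.lam else 1) * D.bar (σ.val (Idx.zero n) i.neg) * D.mu) ∧
        D.mu * (σ⁻¹).val (Idx.zero n) (Idx.zero n)
          = D.bar (σ.val (Idx.zero n) (Idx.zero n)) * D.mu) ∧
      ∀ j : Idx n,
        D.hSub (D.qform (fun i => σ.val i j))
          ((if j = Idx.zero n then (1 : R) else 0), 0) ∈ Δ := by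
  have hcol : ∀ j, σ.val *ᵥ Pi.single j 1 = fun i => σ.val i j := fun j => by
    rw [Matrix.mulVec_single_one]; rfl
  rw [OddFormRingData.unitary, Set.mem_ofPred_eq, ← D.forall_formCoeff_mul_inv_apply_iff,
    ← D.bform_mulVec_eq_iff]
  refine and_congr_right fun hb => ⟨fun hq j => ?_, fun hq => ?_⟩
  · simpa only [hcol, D.qform_single_one] using hq (Pi.single j 1)
  · exact D.hSub_qform_mulVec_mem hΔ σ.val hb fun j => by simpa only [D.qform_single_one] using hq j

/-- Characterization of membership in `U_{2n+1}(R, Δ)` in terms of the entries of `σ` and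
`σ⁻¹` and the quadratic map on columns. -/
theorem statement12 {R : Type*} [Ring R] [Nontrivial R] (D : OddFormRingData R)
    (Δ : Set (R × R)) (hΔ : D.IsFormParam Δ) (n : ℕ) (σ : GLn R n) :
    σ ∈ D.unitary Δ n ↔
      ((∀ i j : Idx n, i.1 ≠ 0 → j.1 ≠ 0 →
          (σ⁻¹).val i j
            = (if 0 < i.1 then D.bar D.lam else 1) * D.bar (σ.val j.neg i.neg) *
                (if 0 < j.1 then D.lam else 1)) ∧
        (∀ j : Idx n, j.1 ≠ 0 →
          D.mu * (σ⁻¹).val (Idx.zero n) j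
            = D.bar (σ.val j.neg (Idx.zero n)) * (if 0 < j.1 then D.lam else 1)) ∧
        (∀ i : Idx n, i.1 ≠ 0 →
          (σ⁻¹).val i (Idx.zero n)
            = (if 0 < i.1 then D.bar D.lam else 1) * D.bar (σ.val (Idx.zero n) i.neg) * D.mu) ∧
        D.mu * (σ⁻¹).val (Idx.zero n) (Idx.zero n)
          = D.bar (σ.val (Idx.zero n) (Idx.zero n)) * D.mu) ∧
      ∀ j : Idx n,
        D.hSub (D.qform (fun i => σ.val i j))
          ((if j = Idx.zero n then (1 : R) else 0), 0) ∈ Δ :=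
  statement12_general D Δ hΔ n σ
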